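/- Norm bound for the Rubio de Francia operator: Let 1 ≤ r₀ < r < ∞, s := (r−r₀)/(r−1) ∈ (0,1], θ ≥ 0, γ := rθ, and w ∈ A_r^{ρ,θ}(ℝⁿ). Define R(g) := [M_γ(g^{1/s} w) w^{−1}]^s for non-negative g ∈ L^{r/(r−r₀)}(w). Assuming the maximal bound ‖M_γ(h)‖_{L^{r'}(σ)} ≤ c [σ]_{A_{r'}^{ρ,θ}}^{1/(r'−1)} ‖h‖_{L^{r'}(σ)} for σ := w^{−1/(r−1)} ∈ A_{r'}^{ρ,θ}, one has ‖R(g)‖_{L^{r/(r−r₀)}(w)} ≤ C [w]_{A_r^{ρ,θ}}^s ‖g‖_{L^{r/(r−r₀)}(w)}. -/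

import Mathlib

/-!
Write `σ = w^{-1/(r-1)}`, `r' = r/(r-1)`, `q = r/(r-r₀)` and `h = g^{1/s} w`. The exponents satisfy
`s q = r'` and `1 - r' = -1/(r-1)`, so pointwise `|R g|^q w ≤ (M_γ h)^{r'} σ` and `|h|^{r'} σ = g^q w`.
Hence `‖R g‖_{L^q(w)} ≤ ‖M_γ h‖_{L^{r'}(σ)}^s`, and the maximal bound, combined with the duality
`[σ]_{A_{r'}^{ρ,θ}} = [w]_{A_r^{ρ,θ}}^{1/(r-1)}`, gives the bound with `C = c₀^s`.
-/

open MeasureTheory Metric Set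
open scoped ENNReal NNReal

noncomputable section

/-- `ℝⁿ`. -/
abbrev Rn (n : ℕ) := EuclideanSpace ℝ (Fin n)

/-- The quantity inside the supremum defining the adapted Muckenhoupt constant
`[w]_{A_p^{ρ,θ}}`, for the ball `B(x,r)`. -/
def apTerm (n : ℕ) (p θ : ℝ) (ρ w : Rn n → ℝ) (x : Rn n) (r : ℝ) : ℝ :=
  (((1 + r / ρ x) ^ θ * (volume (ball x r)).toReal)⁻¹ * ∫ y in ball x r, w y) *
    ((((1 + r / ρ x) ^ θ * (volume (ball x r)).toReal)⁻¹ *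
        ∫ y in ball x r, (w y) ^ (-(1 : ℝ) / (p - 1))) ^ (p - 1))

/-- The adapted Muckenhoupt constant `[w]_{A_p^{ρ,θ}}`, as a supremum over all balls. -/
def apConst (n : ℕ) (p θ : ℝ) (ρ w : Rn n → ℝ) : ℝ≥0∞ :=
  ⨆ (x : Rn n) (r : ℝ) (_ : 0 < r), ENNReal.ofReal (apTerm n p θ ρ w x r)

/-- The weighted Lebesgue norm `‖g‖_{L^q(w)}` (via a lower integral). -/
def wNorm (n : ℕ) (q : ℝ) (w g : Rn n → ℝ) : ℝ≥0∞ :=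
  (∫⁻ x, ENNReal.ofReal |g x| ^ q * ENNReal.ofReal (w x)) ^ (1 / q)

/-- The adapted (Hardy–Littlewood type) maximal function
`M_γ f (x) = sup_{B ∋ x} (Ψ_γ(B)|B|)⁻¹ ∫_B |f|` with `Ψ_γ(B) = (1+r_B/ρ(x_B))^γ`. -/
def adaptedMaximal (n : ℕ) (γ : ℝ) (ρ f : Rn n → ℝ) (x : Rn n) : ℝ≥0∞ :=
  ⨆ (z : Rn n) (r : ℝ) (_ : 0 < r) (_ : x ∈ ball z r),
    (ENNReal.ofReal ((1 + r / ρ z) ^ γ) * volume (ball z r))⁻¹ *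
      ∫⁻ y in ball z r, ENNReal.ofReal |f y|

namespace Real

theorem mul_inv_rpow_mul_self {a w α : ℝ} (ha : 0 ≤ a) (hw : 0 ≤ w) (hα : α ≠ 1) :
    (a * w⁻¹) ^ α * w = a ^ α * w ^ (1 - α) := by
  rcases hw.eq_or_lt with rfl | hw
  · rw [zero_rpow (sub_ne_zero.2 hα.symm)]; simp
  · rw [mul_rpow ha (inv_nonneg.2 hw.le), inv_rpow hw.le, ← rpow_neg hw.le, mul_assoc,
      ← rpow_add_one hw.ne', neg_add_eq_sub]

theorem mul_rpow_mul_rpow_one_sub {b w α : ℝ} (hb : 0 ≤ b) (hw : 0 ≤ w) (hα : α ≠ 0) :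
    (b * w) ^ α * w ^ (1 - α) = b ^ α * w := by
  rcases hw.eq_or_lt with rfl | hw
  · simp [zero_rpow hα]
  · rw [mul_rpow hb hw.le, mul_assoc, ← rpow_add hw, add_sub_cancel, rpow_one]

end Real

section WeightedIntegrals

variable {X : Type*} [MeasurableSpace X] {μ : Measure X}

theorem lintegral_rpow_mul_inv_weight_le (f : X → ℝ≥0∞) {w : X → ℝ} (hw : ∀ x, 0 ≤ w x)
    {s q α : ℝ} (hq : 0 ≤ q) (hsq : s * q = α) (hα : 1 < α) :
    ∫⁻ x, ENNReal.ofReal |((f x).toReal * (w x)⁻¹) ^ s| ^ q * ENNReal.ofReal (w x) ∂μ ≤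
      ∫⁻ x, f x ^ α * ENNReal.ofReal (w x ^ (1 - α)) ∂μ := by
  refine lintegral_mono fun x => ?_
  have hf := (f x).toReal_nonneg
  have hb : 0 ≤ (f x).toReal * (w x)⁻¹ := mul_nonneg hf (inv_nonneg.2 (hw x))
  calc ENNReal.ofReal |((f x).toReal * (w x)⁻¹) ^ s| ^ q * ENNReal.ofReal (w x)
      = ENNReal.ofReal ((f x).toReal ^ α * w x ^ (1 - α)) := by
        rw [abs_of_nonneg (Real.rpow_nonneg hb s), ENNReal.ofReal_rpow_of_nonneg
          (Real.rpow_nonneg hb s) hq, ← ENNReal.ofReal_mul (by positivity),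
          ← Real.rpow_mul hb, hsq, Real.mul_inv_rpow_mul_self hf (hw x) hα.ne']
    _ ≤ f x ^ α * ENNReal.ofReal (w x ^ (1 - α)) := by
        rw [ENNReal.ofReal_mul (by positivity), ← ENNReal.ofReal_rpow_of_nonneg hf (by linarith)]
        gcongr
        exact ENNReal.ofReal_toReal_le

theorem lintegral_rpow_mul_weight_eq {g w : X → ℝ} (hg : ∀ x, 0 ≤ g x) (hw : ∀ x, 0 ≤ w x)
    {e α : ℝ} (he : 0 ≤ e) (hα : 0 < α) :
    ∫⁻ x, ENNReal.ofReal |g x ^ e * w x| ^ α * ENNReal.ofReal (w x ^ (1 - α)) ∂μ =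
      ∫⁻ x, ENNReal.ofReal |g x| ^ (e * α) * ENNReal.ofReal (w x) ∂μ := by
  refine lintegral_congr fun x => ?_
  have hge := Real.rpow_nonneg (hg x) e
  rw [abs_of_nonneg (mul_nonneg hge (hw x)), abs_of_nonneg (hg x),
    ENNReal.ofReal_rpow_of_nonneg (mul_nonneg hge (hw x)) hα.le,
    ← ENNReal.ofReal_mul (Real.rpow_nonneg (mul_nonneg hge (hw x)) α),
    Real.mul_rpow_mul_rpow_one_sub hge (hw x) hα.ne', ← Real.rpow_mul (hg x),
    ENNReal.ofReal_mul (Real.rpow_nonneg (hg x) _),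
    ENNReal.ofReal_rpow_of_nonneg (hg x) (mul_nonneg he hα.le)]

end WeightedIntegrals

section Duality

variable {n : ℕ} {p θ : ℝ} {ρ w : Rn n → ℝ}

theorem apTerm_nonneg (hw : ∀ y, 0 ≤ w y) {x : Rn n} {t : ℝ} (hx : 0 < ρ x) (ht : 0 ≤ t) :
    0 ≤ apTerm n p θ ρ w x t := by
  unfold apTerm
  have : 0 ≤ ∫ y in ball x t, w y := integral_nonneg hw
  have : 0 ≤ ∫ y in ball x t, w y ^ (-1 / (p - 1)) :=
    integral_nonneg fun y => Real.rpow_nonneg (hw y) _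
  positivity

theorem apTerm_rpow_neg_inv_sub_one (hp : 1 < p) (hw : ∀ y, 0 ≤ w y) {x : Rn n} {t : ℝ}
    (hx : 0 < ρ x) (ht : 0 ≤ t) :
    apTerm n (p / (p - 1)) θ ρ (fun y => w y ^ (-1 / (p - 1))) x t =
      apTerm n p θ ρ w x t ^ (1 / (p - 1)) := by
  have hp₁ : 0 < p - 1 := sub_pos.2 hp
  have hconj : p / (p - 1) - 1 = 1 / (p - 1) := by field_simp; ring
  have hw_eq : ∀ y, (w y ^ (-1 / (p - 1))) ^ (-1 / (1 / (p - 1))) = w y := fun y => by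
    rw [← Real.rpow_mul (hw y), show -1 / (p - 1) * (-1 / (1 / (p - 1))) = 1 by
      field_simp, Real.rpow_one]
  set c := ((1 + t / ρ x) ^ θ * (volume (ball x t)).toReal)⁻¹
  have hc : 0 ≤ c := by positivity
  have hA : 0 ≤ c * ∫ y in ball x t, w y := mul_nonneg hc (integral_nonneg hw)
  have hB : 0 ≤ c * ∫ y in ball x t, w y ^ (-1 / (p - 1)) :=
    mul_nonneg hc (integral_nonneg fun y => Real.rpow_nonneg (hw y) _)
  simp only [apTerm, hconj, hw_eq]
  rw [Real.mul_rpow hA (Real.rpow_nonneg hB _), ← Real.rpow_mul hB,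
    mul_one_div_cancel hp₁.ne', Real.rpow_one, mul_comm]

theorem apConst_rpow_neg_inv_sub_one (hp : 1 < p) (hρ : ∀ x, 0 < ρ x) (hw : ∀ y, 0 ≤ w y) :
    apConst n (p / (p - 1)) θ ρ (fun y => w y ^ (-1 / (p - 1))) =
      apConst n p θ ρ w ^ (1 / (p - 1)) := by
  have he : 0 < 1 / (p - 1) := one_div_pos.2 (sub_pos.2 hp)
  simp only [apConst, ← ENNReal.orderIsoRpow_apply _ he, OrderIso.map_iSup]
  refine iSup_congr fun x => iSup_congr fun t => iSup_congr fun ht => ?_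
  rw [ENNReal.orderIsoRpow_apply, apTerm_rpow_neg_inv_sub_one hp hw (hρ x) ht.le,
    ENNReal.ofReal_rpow_of_nonneg (apTerm_nonneg hw (hρ x) ht.le) he.le]

end Duality

theorem rubio_de_francia_operator_norm_general (n : ℕ) (r₀ r θ c₀ : ℝ) (ρ : Rn n → ℝ)
    (hρ : ∀ x, 0 < ρ x) (h1 : 1 ≤ r₀) (h2 : r₀ < r) (hc₀ : 0 < c₀) :
    ∃ C > (0 : ℝ), ∀ w g : Rn n → ℝ, (∀ x, 0 ≤ w x) → apConst n r θ ρ w < ⊤ →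
      (∀ x, 0 ≤ g x) →
      apConst n (r / (r - 1)) θ ρ (fun x => (w x) ^ (-(1 : ℝ) / (r - 1))) < ⊤ →
      (∀ h : Rn n → ℝ,
        (∫⁻ x, adaptedMaximal n (r * θ) ρ h x ^ (r / (r - 1)) *
            ENNReal.ofReal ((w x) ^ (-(1 : ℝ) / (r - 1)))) ^ ((r - 1) / r) ≤
          ENNReal.ofReal c₀ *
            apConst n (r / (r - 1)) θ ρ (fun x => (w x) ^ (-(1 : ℝ) / (r - 1))) ^
              (1 / (r / (r - 1) - 1)) *
            (∫⁻ x, ENNReal.ofReal |h x| ^ (r / (r - 1)) *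
              ENNReal.ofReal ((w x) ^ (-(1 : ℝ) / (r - 1)))) ^ ((r - 1) / r)) →
      wNorm n (r / (r - r₀)) w
          (fun x =>
            ((adaptedMaximal n (r * θ) ρ
                  (fun y => (g y) ^ ((r - 1) / (r - r₀)) * w y) x).toReal *
                (w x)⁻¹) ^ ((r - r₀) / (r - 1))) ≤
        ENNReal.ofReal C * apConst n r θ ρ w ^ ((r - r₀) / (r - 1)) *
          wNorm n (r / (r - r₀)) w g := by
  have hr : 1 < r := h1.trans_lt h2
  have hr₁ : 0 < r - 1 := sub_pos.2 hr
  have hrr₀ : 0 < r - r₀ := sub_pos.2 h2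
  have hs : 0 < (r - r₀) / (r - 1) := div_pos hrr₀ hr₁
  have hσ : -(1 : ℝ) / (r - 1) = 1 - r / (r - 1) := by field_simp; ring
  refine ⟨c₀ ^ ((r - r₀) / (r - 1)), by positivity, fun w g hw _ hg _ hmax => ?_⟩
  set M := fun x => adaptedMaximal n (r * θ) ρ (fun y => g y ^ ((r - 1) / (r - r₀)) * w y) x
  calc wNorm n (r / (r - r₀)) w (fun x => ((M x).toReal * (w x)⁻¹) ^ ((r - r₀) / (r - 1)))
      ≤ (∫⁻ x, M x ^ (r / (r - 1)) * ENNReal.ofReal (w x ^ (-(1 : ℝ) / (r - 1)))) ^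
          ((r - r₀) / r) := by
        rw [wNorm, one_div_div, hσ]
        refine ENNReal.rpow_le_rpow ?_ (by positivity)
        exact lintegral_rpow_mul_inv_weight_le M hw (by positivity)
          (by field_simp [hrr₀.ne']) ((one_lt_div hr₁).2 (by linarith))
    _ = ((∫⁻ x, M x ^ (r / (r - 1)) * ENNReal.ofReal (w x ^ (-(1 : ℝ) / (r - 1)))) ^
          ((r - 1) / r)) ^ ((r - r₀) / (r - 1)) := by
        rw [← ENNReal.rpow_mul]; congr 1; field_simp
    _ ≤ (ENNReal.ofReal c₀ * apConst n r θ ρ w *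
          (∫⁻ x, ENNReal.ofReal |g x| ^ (r / (r - r₀)) * ENNReal.ofReal (w x)) ^
            ((r - 1) / r)) ^ ((r - r₀) / (r - 1)) := by
        gcongr
        convert hmax _ using 3
        · rw [apConst_rpow_neg_inv_sub_one hr hρ hw, ← ENNReal.rpow_mul,
            show 1 / (r - 1) * (1 / (r / (r - 1) - 1)) = 1 by field_simp; ring, ENNReal.rpow_one]
        · rw [hσ, lintegral_rpow_mul_weight_eq hg hw (div_pos hr₁ hrr₀).le (by positivity)]
          congr 3
          field_simp
    _ = ENNReal.ofReal (c₀ ^ ((r - r₀) / (r - 1))) * apConst n r θ ρ w ^ ((r - r₀) / (r - 1)) *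
          wNorm n (r / (r - r₀)) w g := by
        rw [ENNReal.mul_rpow_of_nonneg _ _ hs.le, ENNReal.mul_rpow_of_nonneg _ _ hs.le,
          ENNReal.ofReal_rpow_of_nonneg hc₀.le hs.le, wNorm, ← ENNReal.rpow_mul]
        congr 2
        field_simp

/-- Norm bound for the Rubio de Francia operator
`R(g) := [M_γ(g^{1/s} w) w^{−1}]^s`, `s := (r−r₀)/(r−1)`, `γ := rθ`:
assuming the quantitative `L^{r'}(σ)` maximal bound for `σ := w^{−1/(r−1)}`,
one has `‖R(g)‖_{L^{r/(r−r₀)}(w)} ≤ C [w]_{A_r^{ρ,θ}}^s ‖g‖_{L^{r/(r−r₀)}(w)}`. -/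
theorem rubio_de_francia_operator_norm (n : ℕ) (r₀ r θ c₀ : ℝ) (ρ : Rn n → ℝ)
    (hρ : ∀ x, 0 < ρ x) (h1 : 1 ≤ r₀) (h2 : r₀ < r) (hθ : 0 ≤ θ) (hc₀ : 0 < c₀) :
    ∃ C > (0 : ℝ), ∀ w g : Rn n → ℝ, (∀ x, 0 ≤ w x) → apConst n r θ ρ w < ⊤ →
      (∀ x, 0 ≤ g x) →
      apConst n (r / (r - 1)) θ ρ (fun x => (w x) ^ (-(1 : ℝ) / (r - 1))) < ⊤ →
      (∀ h : Rn n → ℝ,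
        (∫⁻ x, adaptedMaximal n (r * θ) ρ h x ^ (r / (r - 1)) *
            ENNReal.ofReal ((w x) ^ (-(1 : ℝ) / (r - 1)))) ^ ((r - 1) / r) ≤
          ENNReal.ofReal c₀ *
            apConst n (r / (r - 1)) θ ρ (fun x => (w x) ^ (-(1 : ℝ) / (r - 1))) ^
              (1 / (r / (r - 1) - 1)) *
            (∫⁻ x, ENNReal.ofReal |h x| ^ (r / (r - 1)) *
              ENNReal.ofReal ((w x) ^ (-(1 : ℝ) / (r - 1)))) ^ ((r - 1) / r)) →
      wNorm n (r / (r - r₀)) w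
          (fun x =>
            ((adaptedMaximal n (r * θ) ρ
                  (fun y => (g y) ^ ((r - 1) / (r - r₀)) * w y) x).toReal *
                (w x)⁻¹) ^ ((r - r₀) / (r - 1))) ≤
        ENNReal.ofReal C * apConst n r θ ρ w ^ ((r - r₀) / (r - 1)) *
          wNorm n (r / (r - r₀)) w g :=
  rubio_de_francia_operator_norm_general n r₀ r θ c₀ ρ hρ h1 h2 hc₀
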